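/- Let p : H → G be a surjective group homomorphism, K a finite abelian group with trivial actions, ⟨·,·⟩ : K × Hom(K,ℂ×) → ℂ× the evaluation pairing, e ∈ Z²(G;K), and z : G → Hom(K,ℂ×) a homomorphism. Suppose a : H → K is a 1-cochain with (da)(h₁,h₂) := a(h₂) − a(h₁h₂) + a(h₁) = −e(p(h₁), p(h₂)) for all h₁, h₂ ∈ H (i.e. da = −p*e in additive notation). Then the pulled-back 3-cocycle p*ω, where ω(g₁,g₂,g₃) = ⟨e(g₁,g₂), z(g₃)⟩, is a 3-coboundary on H: explicitly p*ω = dπ for the 2-cochain π(h₁,h₂) = ⟨a(h₁), z(p(h₂))⟩⁻¹. -/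
import Mathlib


/-- Let `p : H → G` be surjective, `e ∈ Z²(G;K)` (`K` finite abelian,
additive, trivial actions), `z : G → Hom(K,ℂˣ)` a homomorphism, and `a : H → K` a
1-cochain with `da = -p*e`. Then the pulled-back 3-cocycle
`p*ω`, `ω(g₁,g₂,g₃) = ⟨e(g₁,g₂), z g₃⟩`, equals `dπ` for the 2-cochain
`π(h₁,h₂) = ⟨a h₁, z (p h₂)⟩⁻¹`. -/
theorem stmt9 {H G K : Type*} [Group H] [Group G] [AddCommGroup K] [Finite K]
    (p : H →* G) (hp : Function.Surjective p)
    (e : G → G → K)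
    (he : ∀ g₁ g₂ g₃ : G,
      e g₂ g₃ - e (g₁ * g₂) g₃ + e g₁ (g₂ * g₃) - e g₁ g₂ = 0)
    (z : G →* (Multiplicative K →* ℂˣ))
    (a : H → K)
    (ha : ∀ h₁ h₂ : H, a h₂ - a (h₁ * h₂) + a h₁ = - e (p h₁) (p h₂)) :
    ∀ h₁ h₂ h₃ : H,
      z (p h₃) (Multiplicative.ofAdd (e (p h₁) (p h₂))) =
        (z (p h₃) (Multiplicative.ofAdd (a h₂)))⁻¹ *
          ((z (p h₃) (Multiplicative.ofAdd (a (h₁ * h₂))))⁻¹)⁻¹ *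
          (z (p (h₂ * h₃)) (Multiplicative.ofAdd (a h₁)))⁻¹ *
          ((z (p h₂) (Multiplicative.ofAdd (a h₁)))⁻¹)⁻¹ := by
  intro h₁ h₂ h₃
  have he' : e (p h₁) (p h₂) = -(a h₂ - a (h₁ * h₂) + a h₁) := by
    rw [ha h₁ h₂, neg_neg]
  rw [he', map_mul p, map_mul z, MonoidHom.mul_apply]
  simp only [ofAdd_neg, ofAdd_sub, ofAdd_add, map_mul, map_inv, map_div, inv_inv]
  simp only [zpow_neg, zpow_one, div_eq_mul_inv, mul_inv, inv_inv]
  rw [mul_assoc, mul_assoc, mul_comm (((z (p h₂)) (Multiplicative.ofAdd (a h₁)))⁻¹),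
    inv_mul_cancel_right, ← mul_assoc]
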